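/- arXiv:2511.16199 — 8 statements merged into one kernel-verified Lean document; each statement's English description precedes it below -/
import Mathlib

section
/- Let a, b, c be real with c ≠ 0 and define h(λ) = λ + cλe^{-λ} + a + be^{-λ} on ℂ. Then there exists a real constant ν₁ such that every complex root λ of h satisfies Re λ > ν₁. -/
open Complex

theorem stmt_0 (a b c : ℝ) (hc : c ≠ 0) :
    ∃ ν₁ : ℝ, ∀ z : ℂ,
      z + (c : ℂ) * z * Complex.exp (-z) + (a : ℂ) + (b : ℂ) * Complex.exp (-z) = 0 →
      ν₁ < z.re := by
  have hc' : (0:ℝ) < |c| := abs_pos.mpr hc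
  set M : ℝ := max (max (|a| + 1) (2 * |b| / |c|)) (Real.log (4 / |c|)) with hMdef
  refine ⟨-M, fun z hz => ?_⟩
  by_contra hre
  push_neg at hre
  have hM1 : |a| + 1 ≤ M := le_trans (le_max_left _ _) (le_max_left _ _)
  have hM2 : 2 * |b| / |c| ≤ M := le_trans (le_max_right _ _) (le_max_left _ _)
  have hM3 : Real.log (4 / |c|) ≤ M := le_max_right _ _
  have hMz : M ≤ ‖z‖ := by
    calc M ≤ -z.re := by linarith
    _ ≤ |z.re| := neg_le_abs z.re
    _ ≤ ‖z‖ := Complex.abs_re_le_norm z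
  have heq : z + (a:ℂ) = -(((c:ℂ) * z + (b:ℂ)) * Complex.exp (-z)) := by
    linear_combination hz
  have habs : ‖z + (a:ℂ)‖ =
      ‖(c:ℂ) * z + (b:ℂ)‖ * Real.exp (-z.re) := by
    rw [heq, norm_neg, norm_mul, Complex.norm_exp]
    simp
  -- bounds
  set A := ‖z‖ with hA
  set B := ‖(c:ℂ) * z + (b:ℂ)‖ with hB
  have h1 : ‖z + (a:ℂ)‖ ≤ A + |a| := by
    calc ‖z + (a:ℂ)‖ ≤ ‖z‖ + ‖(a:ℂ)‖ := norm_add_le _ _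
    _ = A + |a| := by simp [hA]
  have h2 : |c| * A - |b| ≤ B := by
    have : ‖(c:ℂ) * z‖ ≤ B + ‖(b:ℂ)‖ := by
      calc ‖(c:ℂ) * z‖ = ‖(c:ℂ) * z + (b:ℂ) + (-(b:ℂ))‖ := by ring_nf
      _ ≤ ‖(c:ℂ) * z + (b:ℂ)‖ + ‖(-(b:ℂ))‖ := norm_add_le _ _
      _ = B + ‖(b:ℂ)‖ := by rw [norm_neg]
    simp only [norm_mul, Complex.norm_real, Real.norm_eq_abs] at this
    linarith
  have h3 : 4 / |c| ≤ Real.exp (-z.re) := by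
    calc 4 / |c| = Real.exp (Real.log (4 / |c|)) :=
      (Real.exp_log (by positivity)).symm
    _ ≤ Real.exp (-z.re) := Real.exp_le_exp.mpr (by linarith)
  have hE : (0:ℝ) < Real.exp (-z.re) := Real.exp_pos _
  have hB0 : 0 ≤ |c| * A - |b| := by
    have : 2 * |b| ≤ |c| * M := by
      rw [div_le_iff₀ hc'] at hM2; linarith
    nlinarith [abs_nonneg b, mul_le_mul_of_nonneg_left hMz (le_of_lt hc')]
  have key : (|c| * A - |b|) * (4 / |c|) ≤ B * Real.exp (-z.re) :=
    mul_le_mul h2 h3 (by positivity) (norm_nonneg _)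
  have hcalc : (|c| * A - |b|) * (4 / |c|) = 4 * A - 4 * |b| / |c| := by
    field_simp
  have h4 : 4 * |b| / |c| ≤ 2 * M := by
    rw [div_le_iff₀ hc'] at hM2 ⊢; linarith
  have hAa : A + |a| < 2 * A := by nlinarith [abs_nonneg a]
  nlinarith [habs, h1, key]
end

section
/- Let a, b, c be real with c ≠ 0 and define h(λ) = λ + cλe^{-λ} + a + be^{-λ} on ℂ. Then there exists a real constant ν₂ such that every complex root λ of h satisfies Re λ < ν₂. -/
open Complex

theorem stmt_1 (a b c : ℝ) (hc : c ≠ 0) :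
    ∃ ν₂ : ℝ, ∀ z : ℂ,
      z + (c : ℂ) * z * Complex.exp (-z) + (a : ℂ) + (b : ℂ) * Complex.exp (-z) = 0 →
      z.re < ν₂ := by
  refine ⟨2*|a| + 2*|b| + 2*|c| + 3, fun z hz => ?_⟩
  by_contra hre
  push_neg at hre
  set ν : ℝ := 2*|a| + 2*|b| + 2*|c| + 3 with hν
  have ha0 : (0:ℝ) ≤ |a| := abs_nonneg a
  have hb0 : (0:ℝ) ≤ |b| := abs_nonneg b
  have hc0 : (0:ℝ) ≤ |c| := abs_nonneg c
  have heq : z + (a:ℂ) = -(((c:ℂ)*z + b) * Complex.exp (-z)) := by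
    linear_combination hz
  have habs : ‖z + a‖ = ‖(c:ℂ)*z + b‖ * Real.exp (-z.re) := by
    rw [heq]
    simp [map_mul, Complex.norm_exp]
  have h1 : ‖(c:ℂ)*z + b‖ ≤ |c| * ‖z‖ + |b| := by
    calc ‖(c:ℂ)*z + b‖ ≤ ‖(c:ℂ)*z‖ + ‖(b:ℂ)‖ :=
          norm_add_le _ _
      _ = |c| * ‖z‖ + |b| := by
          rw [norm_mul, Complex.norm_real, Complex.norm_real, Real.norm_eq_abs, Real.norm_eq_abs]
  have hE : Real.exp (-z.re) ≤ Real.exp (-ν) := Real.exp_le_exp.mpr (by linarith)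
  have hA : ν ≤ ‖z‖ := le_trans hre (Complex.re_le_norm z)
  have hexpν : ν ≤ Real.exp ν := by
    have := Real.add_one_le_exp ν
    linarith
  have hνpos : (0:ℝ) < ν := by positivity
  have hEν : Real.exp (-ν) = (Real.exp ν)⁻¹ := Real.exp_neg ν
  have hexppos : (0:ℝ) < Real.exp ν := Real.exp_pos ν
  have hc2 : |c| * Real.exp (-ν) ≤ 1/2 := by
    rw [hEν]
    rw [mul_inv_le_iff₀ hexppos]
    nlinarith
  have hb2 : |b| * Real.exp (-ν) ≤ 1 := by
    rw [hEν]
    rw [mul_inv_le_iff₀ hexppos]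
    nlinarith
  have htri : ‖z‖ ≤ ‖z + a‖ + |a| := by
    calc ‖z‖ = ‖(z + a) + (-(a:ℂ))‖ := by ring_nf
      _ ≤ ‖z + a‖ + ‖(-(a:ℂ))‖ := norm_add_le _ _
      _ = ‖z + a‖ + |a| := by simp [Complex.norm_real]
  have hEpos : (0:ℝ) ≤ Real.exp (-z.re) := (Real.exp_pos _).le
  have hkey : ‖z + a‖ ≤ (1/2) * ‖z‖ + 1 := by
    rw [habs]
    have : ‖(c:ℂ)*z + b‖ * Real.exp (-z.re) ≤
        (|c| * ‖z‖ + |b|) * Real.exp (-ν) := by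
      have hnn : (0:ℝ) ≤ ‖(c:ℂ)*z + b‖ := norm_nonneg _
      nlinarith [norm_nonneg z]
    nlinarith [norm_nonneg z]
  nlinarith [norm_nonneg z]
end

section
/- Let a, b, c be real with c ≠ 0 and define h(λ) = λ + cλe^{-λ} + a + be^{-λ}. The restriction of h to the reals has at most three distinct real zeros. -/
lemma rolle_key (f f' : ℝ → ℝ) (hf : ∀ x, HasDerivAt f (f' x) x) (n : ℕ) (t : Finset ℝ)
    (ht : ∀ x, f' x = 0 → x ∈ t) (htn : t.card ≤ n) :
    ∃ s : Finset ℝ, s.card ≤ n + 1 ∧ ∀ x, f x = 0 → x ∈ s := by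
  have hcont : Continuous f := by
    rw [continuous_iff_continuousAt]; exact fun x => (hf x).continuousAt
  have bound : ∀ u : Finset ℝ, (∀ x ∈ u, f x = 0) → u.card ≤ n + 1 := by
    intro u hu
    by_contra hcard
    push_neg at hcard
    set m := u.card with hm
    set l := u.sort (· ≤ ·) with hl
    have hlen : l.length = m := Finset.length_sort _
    have hsl : l.SortedLT := u.sortedLT_sort
    have hmono : StrictMono l.get := hsl.strictMono_get
    have hmem : ∀ (i : Fin l.length), l.get i ∈ u := by
      intro i
      have : l.get ⟨i.1, i.2⟩ ∈ l := l.get_mem ⟨i.1, i.2⟩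
      simp only [Fin.eta] at this
      exact (Finset.mem_sort (α := ℝ) (· ≤ ·)).mp this
    have step : ∀ i : Fin (m - 1),
        ∃ z, z ∈ Set.Ioo (l.get ⟨i, by omega⟩) (l.get ⟨i + 1, by omega⟩) ∧ f' z = 0 := by
      intro i
      have hlt : (⟨(i : ℕ), by omega⟩ : Fin l.length) < ⟨i + 1, by omega⟩ := by
        simp [Fin.lt_def]
      have hab : l.get ⟨(i : ℕ), by omega⟩ < l.get ⟨i + 1, by omega⟩ := hmono hlt
      have h1 : f (l.get ⟨(i : ℕ), by omega⟩) = 0 := hu _ (hmem _)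
      have h2 : f (l.get ⟨i + 1, by omega⟩) = 0 := hu _ (hmem _)
      exact exists_hasDerivAt_eq_zero hab hcont.continuousOn (h1.trans h2.symm)
        (fun x _ => hf x)
    choose z hz1 hz2 using step
    have hzmono : StrictMono z := by
      intro i j hij
      have h1 : z i < l.get ⟨(i : ℕ) + 1, by omega⟩ := (hz1 i).2
      have h2 : l.get ⟨(j : ℕ), by omega⟩ < z j := (hz1 j).1
      have h3 : l.get ⟨(i : ℕ) + 1, by omega⟩ ≤ l.get ⟨(j : ℕ), by omega⟩ := by
        apply hmono.monotone
        simp [Fin.le_def]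
        omega
      linarith
    have hinj : Function.Injective (fun i : Fin (m - 1) => (⟨z i, ht _ (hz2 i)⟩ : {x // x ∈ t})) := by
      intro i j hij
      exact hzmono.injective (by simpa using hij)
    have := Fintype.card_le_of_injective _ hinj
    simp [Fintype.card_coe] at this
    omega
  have hfin : {x | f x = 0}.Finite := by
    by_contra hinf
    obtain ⟨u, hu, hucard⟩ := Set.Infinite.exists_subset_card_eq hinf (n + 2)
    have := bound u (fun x hx => hu hx)
    omega
  refine ⟨hfin.toFinset, ?_, fun x hx => hfin.mem_toFinset.2 hx⟩
  exact bound _ (fun x hx => hfin.mem_toFinset.1 hx)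

theorem stmt_2 (a b c : ℝ) (hc : c ≠ 0) :
    ∃ s : Finset ℝ, s.card ≤ 3 ∧
      ∀ x : ℝ, x + c * x * Real.exp (-x) + a + b * Real.exp (-x) = 0 → x ∈ s := by
  set g : ℝ → ℝ := fun x => (x + a) * Real.exp x + c * x + b with hg
  set g' : ℝ → ℝ := fun x => (x + a + 1) * Real.exp x + c with hg'
  set g'' : ℝ → ℝ := fun x => (x + a + 2) * Real.exp x with hg''
  have hdg : ∀ x, HasDerivAt g (g' x) x := by
    intro x
    have h1 : HasDerivAt (fun x : ℝ => (x + a) * Real.exp x)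
        (1 * Real.exp x + (x + a) * Real.exp x) x :=
      ((hasDerivAt_id x).add_const a).mul (Real.hasDerivAt_exp x)
    have h2 : HasDerivAt (fun x : ℝ => c * x + b) c x := by
      simpa using ((hasDerivAt_id x).const_mul c).add_const b
    have h3 := h1.add h2
    convert h3 using 1
    case e'_8 => funext y; simp only [hg, Pi.add_apply]; ring
    case e'_9 => simp only [hg']; ring
    all_goals rfl
  have hdg' : ∀ x, HasDerivAt g' (g'' x) x := by
    intro x
    have h1 : HasDerivAt (fun x : ℝ => (x + a + 1) * Real.exp x)
        (1 * Real.exp x + (x + a + 1) * Real.exp x) x :=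
      (((hasDerivAt_id x).add_const a).add_const 1).mul (Real.hasDerivAt_exp x)
    have h3 := h1.add_const c
    convert h3 using 1
    case e'_9 => simp only [hg'']; ring
    all_goals rfl
  have base : ∀ x, g'' x = 0 → x ∈ ({-(a + 2)} : Finset ℝ) := by
    intro x hx
    have hexp := Real.exp_ne_zero x
    have : x + a + 2 = 0 := by
      rcases mul_eq_zero.1 hx with h | h
      · exact h
      · exact absurd h hexp
    simp only [Finset.mem_singleton]
    linarith
  obtain ⟨t1, ht1c, ht1⟩ := rolle_key g' g'' hdg' 1 _ base (by simp)
  obtain ⟨t2, ht2c, ht2⟩ := rolle_key g g' hdg 2 t1 ht1 ht1c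
  refine ⟨t2, ht2c, fun x hx => ?_⟩
  apply ht2
  have : g x = Real.exp x * (x + c * x * Real.exp (-x) + a + b * Real.exp (-x)) := by
    simp only [hg]
    rw [mul_add, mul_add, mul_add]
    rw [show Real.exp x * (c * x * Real.exp (-x)) = c * x * (Real.exp x * Real.exp (-x)) by ring,
      show Real.exp x * (b * Real.exp (-x)) = b * (Real.exp x * Real.exp (-x)) by ring,
      ← Real.exp_add, add_neg_cancel, Real.exp_zero]
    ring
  rw [this, hx, mul_zero]
end

section
/- If c ≠ -1 and c ≠ 0, then every root of h₀(λ) = λ(1 + c·e^{-λ}) is simple, i.e., if h₀(λ) = 0 then h₀'(λ) ≠ 0. -/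
open Complex

theorem stmt_8 (c : ℝ) (hc : c ≠ 0) (hc1 : c ≠ -1) (z : ℂ)
    (hz : z * (1 + (c : ℂ) * Complex.exp (-z)) = 0) :
    deriv (fun w : ℂ => w * (1 + (c : ℂ) * Complex.exp (-w))) z ≠ 0 := by
  have hd : HasDerivAt (fun w : ℂ => w * (1 + (c : ℂ) * Complex.exp (-w)))
      ((1 + (c : ℂ) * Complex.exp (-z)) + z * ((c : ℂ) * (Complex.exp (-z) * (-1)))) z := by
    have h1 : HasDerivAt (fun w : ℂ => 1 + (c : ℂ) * Complex.exp (-w))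
        ((c : ℂ) * (Complex.exp (-z) * (-1))) z := by
      have := ((hasDerivAt_neg z).cexp).const_mul (c : ℂ)
      exact (this.const_add 1)
    exact ((hasDerivAt_id' z).mul h1).congr_deriv (by ring)
  rw [hd.deriv]
  rcases mul_eq_zero.mp hz with h | h
  · subst h
    simp only [neg_zero, Complex.exp_zero, mul_one, zero_mul, add_zero]
    intro h
    apply hc1
    have : (c : ℂ) = -1 := by linear_combination h
    exact_mod_cast this
  · have he : (c : ℂ) * Complex.exp (-z) = -1 := by linear_combination h
    rw [he]
    have hz0 : z ≠ 0 := by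
      intro h0
      subst h0
      simp [Complex.exp_zero] at he
      exact hc1 (by exact_mod_cast he)
    intro hcontra
    apply hz0
    linear_combination z * he + hcontra
end

section
/- Let c ≠ 0 be real and zₙ = ln|c| + i(2nπ + arg(-c)) for n ∈ ℤ. For every continuous function φ : [-1,0] → ℂ, setting âₙ(φ) = ∫_{-1}^{0} e^{zₙθ} φ(θ) dθ, there holds ∑_{n∈ℤ} |âₙ(φ)|² ≤ max(1, |c|^{-2}) · ‖φ‖_∞², where ‖φ‖_∞ is the supremum norm. -/
open Complex Real MeasureTheory Set AddCircle

instance : Fact ((0 : ℝ) < 1) := ⟨zero_lt_one⟩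

theorem stmt_10 (c : ℝ) (hc : c ≠ 0) (φ : ℝ → ℂ)
    (hφ : ContinuousOn φ (Set.Icc (-1 : ℝ) 0)) (M : ℝ)
    (hM : ∀ θ ∈ Set.Icc (-1 : ℝ) 0, ‖φ θ‖ ≤ M) :
    ∑' n : ℤ,
        ‖∫ θ in (-1:ℝ)..0,
            Complex.exp (((Real.log |c| : ℂ) +
              Complex.I * (2 * (n : ℂ) * (π : ℂ) + (Complex.arg (-(c : ℂ)) : ℂ))) * (θ : ℂ)) *
              φ θ‖ ^ 2
      ≤ max 1 (|c|⁻¹ ^ 2) * M ^ 2 := by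
  have hM0 : 0 ≤ M := le_trans (norm_nonneg _) (hM 0 (by norm_num))
  set a : ℝ := Complex.arg (-(c : ℂ)) with ha
  set w : ℂ := (Real.log |c| : ℂ) + Complex.I * (a : ℂ) with hw
  set ψ : ℝ → ℂ := fun θ => Complex.exp (w * θ) * φ θ with hψ
  set C : ℝ := max 1 (|c|⁻¹ ^ 2) * M ^ 2 with hC
  have h01 : (-1 : ℝ) + 1 = 0 := by norm_num
  have hsub : Set.Ioc (-1 : ℝ) (-1 + 1) ⊆ Set.Icc (-1 : ℝ) 0 := by
    rw [h01]; exact Set.Ioc_subset_Icc_self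
  -- pointwise bound on ψ on Icc (-1) 0
  have hBn : ∀ θ ∈ Set.Icc (-1 : ℝ) 0, ‖ψ θ‖ ≤ max 1 |c|⁻¹ * M := by
    intro θ hθ
    have hre : (w * (θ : ℂ)).re = Real.log |c| * θ := by
      simp [hw, Complex.mul_re, Complex.add_re, Complex.add_im]
    have hexp : ‖Complex.exp (w * θ)‖ = Real.exp (Real.log |c| * θ) := by
      rw [Complex.norm_exp, hre]
    have hexp_le : Real.exp (Real.log |c| * θ) ≤ max 1 |c|⁻¹ := by
      rcases le_or_gt 0 (Real.log |c|) with hL | hL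
      · have : Real.log |c| * θ ≤ 0 := mul_nonpos_of_nonneg_of_nonpos hL hθ.2
        calc Real.exp (Real.log |c| * θ) ≤ Real.exp 0 := Real.exp_le_exp.2 this
          _ = 1 := Real.exp_zero
          _ ≤ max 1 |c|⁻¹ := le_max_left _ _
      · have : Real.log |c| * θ ≤ -Real.log |c| := by nlinarith [hθ.1]
        calc Real.exp (Real.log |c| * θ) ≤ Real.exp (-Real.log |c|) := Real.exp_le_exp.2 this
          _ = |c|⁻¹ := by
              rw [Real.exp_neg, Real.exp_log (abs_pos.mpr hc)]
          _ ≤ max 1 |c|⁻¹ := le_max_right _ _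
    calc ‖ψ θ‖ = ‖Complex.exp (w * θ)‖ * ‖φ θ‖ := norm_mul _ _
      _ ≤ max 1 |c|⁻¹ * M := by
          apply mul_le_mul (hexp ▸ hexp_le) (hM θ hθ) (norm_nonneg _)
          exact le_trans zero_le_one (le_max_left _ _)
  have hmaxsq : (max 1 |c|⁻¹ * M) ^ 2 = C := by
    rw [hC, mul_pow]
    congr 1
    rcases le_total (|c|⁻¹) 1 with h | h
    · rw [max_eq_left h, max_eq_left (by nlinarith [inv_nonneg.mpr (abs_nonneg c)])]
      norm_num
    · rw [max_eq_right h, max_eq_right (by nlinarith)]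
  have hBsq : ∀ θ ∈ Set.Icc (-1 : ℝ) 0, ‖ψ θ‖ ^ 2 ≤ C := by
    intro θ hθ
    rw [← hmaxsq]
    exact pow_le_pow_left₀ (norm_nonneg _) (hBn θ hθ) 2
  -- the periodized function
  set g : AddCircle (1 : ℝ) → ℂ := AddCircle.liftIoc 1 (-1) ψ with hg
  have hψc : ContinuousOn ψ (Set.Icc (-1 : ℝ) 0) :=
    ((Complex.continuous_exp.comp (continuous_const.mul Complex.continuous_ofReal)).continuousOn).mul hφ
  have hgmeas : Measurable g := by
    have h2 : Continuous (Set.restrict (Set.Ioc (-1 : ℝ) (-1 + 1)) ψ) :=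
      continuousOn_iff_continuous_restrict.mp (hψc.mono hsub)
    exact h2.measurable.comp (measurableEquivIoc 1 (-1)).measurable
  have hgval : ∀ t : AddCircle (1 : ℝ), ∃ x ∈ Set.Ioc (-1 : ℝ) (-1 + 1), g t = ψ x := by
    intro t
    exact ⟨(equivIoc 1 (-1) t : ℝ), (equivIoc 1 (-1) t).2, rfl⟩
  have hgbdd : ∀ t : AddCircle (1 : ℝ), ‖g t‖ ≤ max 1 |c|⁻¹ * M := by
    intro t
    obtain ⟨x, hx, hgx⟩ := hgval t
    rw [hgx]
    exact hBn x (hsub hx)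
  have hmem : MemLp g 2 haarAddCircle :=
    MemLp.of_bound hgmeas.aestronglyMeasurable _ (Filter.Eventually.of_forall hgbdd)
  set G := hmem.toLp g with hG
  have hcoeff : ∀ n : ℤ, fourierCoeff (G : AddCircle (1 : ℝ) → ℂ) n = fourierCoeff g n := by
    intro n
    apply integral_congr_ae
    filter_upwards [hmem.coeFn_toLp] with t ht
    rw [ht]
  -- identify the integrals with Fourier coefficients
  have key : ∀ n : ℤ,
      (∫ θ in (-1:ℝ)..0,
          Complex.exp (((Real.log |c| : ℂ) +
            Complex.I * (2 * (n : ℂ) * (π : ℂ) + (a : ℂ))) * (θ : ℂ)) * φ θ)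
        = fourierCoeff g (-n) := by
    intro n
    rw [fourierCoeff_eq_intervalIntegral g (-n) (-1), neg_neg, h01]
    rw [show ((1 : ℝ)/(1 : ℝ)) = 1 by norm_num, one_smul]
    rw [intervalIntegral.integral_of_le (by norm_num : (-1:ℝ) ≤ 0),
      intervalIntegral.integral_of_le (by norm_num : (-1:ℝ) ≤ 0)]
    refine setIntegral_congr_fun measurableSet_Ioc fun x hx => ?_
    have hx' : x ∈ Set.Ioc (-1 : ℝ) (-1 + 1) := by rwa [h01]
    rw [hg, liftIoc_coe_apply hx', fourier_coe_apply, smul_eq_mul, hψ]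
    rw [← mul_assoc, ← Complex.exp_add]
    congr 1
    rw [hw]
    push_cast
    ring_nf
  -- Parseval and the final bound
  calc ∑' n : ℤ,
        ‖∫ θ in (-1:ℝ)..0,
            Complex.exp (((Real.log |c| : ℂ) +
              Complex.I * (2 * (n : ℂ) * (π : ℂ) + (a : ℂ))) * (θ : ℂ)) *
              φ θ‖ ^ 2
      = ∑' n : ℤ, ‖fourierCoeff (G : AddCircle (1 : ℝ) → ℂ) (-n)‖ ^ 2 := by
        congr 1; funext n; rw [key n, hcoeff]
    _ = ∑' n : ℤ, ‖fourierCoeff (G : AddCircle (1 : ℝ) → ℂ) n‖ ^ 2 :=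
        (Equiv.neg ℤ).tsum_eq fun n => ‖fourierCoeff (G : AddCircle (1 : ℝ) → ℂ) n‖ ^ 2
    _ = ∫ t : AddCircle (1 : ℝ), ‖(G : AddCircle (1 : ℝ) → ℂ) t‖ ^ 2 ∂haarAddCircle :=
        tsum_sq_fourierCoeff G
    _ = ∫ t : AddCircle (1 : ℝ), ‖g t‖ ^ 2 ∂haarAddCircle := by
        apply integral_congr_ae
        filter_upwards [hmem.coeFn_toLp] with t ht
        rw [ht]
    _ = ∫ x in Set.Ioc (-1 : ℝ) (-1 + 1), ‖g x‖ ^ 2 := by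
        have h := AddCircle.integral_preimage 1 (-1) (fun t : AddCircle (1 : ℝ) => ‖g t‖ ^ 2)
        rw [volume_eq_smul_haarAddCircle, integral_smul_measure] at h
        simp only [ENNReal.toReal_ofReal zero_le_one, one_smul] at h
        exact h.symm
    _ ≤ C := by
        have hmeas : (volume (Set.Ioc (-1 : ℝ) (-1 + 1))) < ⊤ := by
          rw [Real.volume_Ioc]; exact ENNReal.ofReal_lt_top
        have hb : ∀ x ∈ Set.Ioc (-1 : ℝ) (-1 + 1), ‖‖g (x : AddCircle (1 : ℝ))‖ ^ 2‖ ≤ C := by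
          intro x hx
          rw [Real.norm_eq_abs, _root_.abs_of_nonneg (by positivity)]
          rw [hg, liftIoc_coe_apply hx]
          exact hBsq x (hsub hx)
        have h2 := norm_setIntegral_le_of_norm_le_const hmeas hb
        calc (∫ x in Set.Ioc (-1 : ℝ) (-1 + 1), ‖g x‖ ^ 2)
            ≤ ‖∫ x in Set.Ioc (-1 : ℝ) (-1 + 1), ‖g x‖ ^ 2‖ := le_abs_self _
          _ ≤ C * (volume (Set.Ioc (-1 : ℝ) (-1 + 1))).toReal := h2
          _ = C := by
              rw [Real.volume_Ioc]
              norm_num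
end

section
/- Let a, b, c be real with c ≠ 0, and suppose x₀ ≠ ln|c| is a real number such that λ = x₀ + iy (y real, y > 0) is a root of λ + cλe^{-λ} + a + be^{-λ} = 0. Then y ∉ {2kπ + π : k ∈ ℤ}. -/
/-!
At `y = (2k + 1)π` the factor `e^{-λ} = -e^{-x₀}` is real, so the imaginary part of the
characteristic equation reads `y (1 - c e^{-x₀}) = 0`. As `y ≠ 0` this forces `c = e^{x₀}`,
i.e. `x₀ = ln |c|`.
-/

open Complex Real

lemma mul_re_eq_neg_one_of_root {a b c : ℝ} {z w : ℂ} (hw : w.im = 0) (hz : z.im ≠ 0)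
    (hroot : z + c * z * w + a + b * w = 0) : c * w.re = -1 := by
  have him := congrArg Complex.im hroot
  simp only [add_im, mul_im, mul_re, ofReal_re, ofReal_im, hw, zero_im] at him
  have hfactor : z.im * (1 + c * w.re) = 0 := by linarith
  linarith [(mul_eq_zero.mp hfactor).resolve_left hz]

lemma exp_neg_ofReal_add_I_mul_of_cos_eq_neg_one (x : ℝ) {y : ℝ} (hcos : Real.cos y = -1) :
    Complex.exp (-((x : ℂ) + I * y)) = (-Real.exp (-x) : ℝ) := by
  have hsin : Real.sin y = 0 := Real.sin_eq_zero_iff_cos_eq.mpr (Or.inr hcos)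
  apply Complex.ext <;>
    simp [exp_re, exp_im, hcos, hsin]

lemma log_abs_eq_of_mul_exp_neg_eq_one {c x : ℝ} (h : c * Real.exp (-x) = 1) :
    Real.log |c| = x := by
  have hc : c = Real.exp x := by
    rw [Real.exp_neg] at h
    field_simp at h
    exact h
  rw [hc, abs_of_pos (Real.exp_pos x), Real.log_exp]

theorem stmt_11_general (a b c : ℝ) (x₀ y : ℝ)
    (hx : x₀ ≠ Real.log |c|) (hy : 0 < y)
    (hroot :
      ((x₀ : ℂ) + Complex.I * y) +
        (c : ℂ) * ((x₀ : ℂ) + Complex.I * y) * Complex.exp (-((x₀ : ℂ) + Complex.I * y)) +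
        (a : ℂ) + (b : ℂ) * Complex.exp (-((x₀ : ℂ) + Complex.I * y)) = 0) :
    ∀ k : ℤ, y ≠ 2 * k * π + π := by
  rintro k rfl
  have hcos : Real.cos (2 * k * π + π) = -1 := by
    rw [show 2 * (k : ℝ) * π + π = k * (2 * π) + π by ring, Real.cos_int_mul_two_pi_add_pi]
  have hexp := exp_neg_ofReal_add_I_mul_of_cos_eq_neg_one x₀ hcos
  have him : ((x₀ : ℂ) + I * (2 * k * π + π : ℝ)).im ≠ 0 := by simpa using hy.ne'
  have hcw := mul_re_eq_neg_one_of_root (by rw [hexp, ofReal_im]) him hroot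
  rw [hexp, ofReal_re] at hcw
  exact hx (log_abs_eq_of_mul_exp_neg_eq_one (by linarith)).symm

theorem stmt_11 (a b c : ℝ) (hc : c ≠ 0) (x₀ y : ℝ)
    (hx : x₀ ≠ Real.log |c|) (hy : 0 < y)
    (hroot :
      ((x₀ : ℂ) + Complex.I * y) +
        (c : ℂ) * ((x₀ : ℂ) + Complex.I * y) * Complex.exp (-((x₀ : ℂ) + Complex.I * y)) +
        (a : ℂ) + (b : ℂ) * Complex.exp (-((x₀ : ℂ) + Complex.I * y)) = 0) :
    ∀ k : ℤ, y ≠ 2 * k * π + π :=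
  stmt_11_general a b c x₀ y hx hy hroot
end

section
/- Let a, b, c be real with c ≠ 0 and fix a real x₀ ≠ ln|c|. Then there is at most one y > 0 such that x₀ + iy is a root of λ + cλe^{-λ} + a + be^{-λ} = 0. Equivalently, there is at most one pair of non-real conjugate roots on the vertical line Re λ = x₀. -/
open Complex Real

lemma key_12 (a b c x₀ y : ℝ)
    (h : ((x₀ : ℂ) + Complex.I * y) +
        (c : ℂ) * ((x₀ : ℂ) + Complex.I * y) * Complex.exp (-((x₀ : ℂ) + Complex.I * y)) +
        (a : ℂ) + (b : ℂ) * Complex.exp (-((x₀ : ℂ) + Complex.I * y)) = 0) :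
    (x₀ + a) ^ 2 + y ^ 2 = Real.exp (-x₀) ^ 2 * ((c * x₀ + b) ^ 2 + (c * y) ^ 2) := by
  set z : ℂ := (x₀ : ℂ) + Complex.I * y with hz
  have h' : z + (a : ℂ) = -(Complex.exp (-z) * ((c : ℂ) * z + (b : ℂ))) := by
    linear_combination h
  have h2 := congrArg (fun w : ℂ => ‖w‖) h'
  rw [norm_neg, norm_mul, Complex.norm_exp] at h2
  have hre : (-z).re = -x₀ := by simp [hz]
  rw [hre] at h2
  have h3 := congrArg (· ^ 2) h2
  simp only [mul_pow, Complex.sq_norm, Complex.normSq_apply] at h3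
  simp only [hz, Complex.add_re, Complex.add_im, Complex.mul_re, Complex.mul_im,
    Complex.I_re, Complex.I_im, Complex.ofReal_re, Complex.ofReal_im] at h3
  ring_nf at h3 ⊢
  linarith

theorem stmt_12 (a b c : ℝ) (hc : c ≠ 0) (x₀ : ℝ) (hx : x₀ ≠ Real.log |c|)
    (y₁ y₂ : ℝ) (hy₁ : 0 < y₁) (hy₂ : 0 < y₂)
    (h₁ :
      ((x₀ : ℂ) + Complex.I * y₁) +
        (c : ℂ) * ((x₀ : ℂ) + Complex.I * y₁) * Complex.exp (-((x₀ : ℂ) + Complex.I * y₁)) +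
        (a : ℂ) + (b : ℂ) * Complex.exp (-((x₀ : ℂ) + Complex.I * y₁)) = 0)
    (h₂ :
      ((x₀ : ℂ) + Complex.I * y₂) +
        (c : ℂ) * ((x₀ : ℂ) + Complex.I * y₂) * Complex.exp (-((x₀ : ℂ) + Complex.I * y₂)) +
        (a : ℂ) + (b : ℂ) * Complex.exp (-((x₀ : ℂ) + Complex.I * y₂)) = 0) :
    y₁ = y₂ := by
  have k₁ := key_12 a b c x₀ y₁ h₁
  have k₂ := key_12 a b c x₀ y₂ h₂
  have hne : Real.exp (-x₀) ^ 2 * c ^ 2 ≠ 1 := by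
    intro hE
    apply hx
    have hcsq : c ^ 2 = Real.exp x₀ ^ 2 := by
      have hmul : Real.exp (-x₀) * Real.exp x₀ = 1 := by
        rw [← Real.exp_add]; simp
      linear_combination Real.exp x₀ ^ 2 * hE - c ^ 2 * (Real.exp (-x₀) * Real.exp x₀ + 1) * hmul
    have habs : |c| = Real.exp x₀ := by
      have := (_root_.sq_abs c).trans hcsq
      nlinarith [abs_nonneg c, Real.exp_pos x₀]
    rw [habs, Real.log_exp]
  have hsq : y₁ ^ 2 = y₂ ^ 2 := by
    have hdiff : (1 - Real.exp (-x₀) ^ 2 * c ^ 2) * (y₁ ^ 2 - y₂ ^ 2) = 0 := by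
      nlinarith [k₁, k₂]
    rcases mul_eq_zero.mp hdiff with h | h
    · exact absurd (by linarith : Real.exp (-x₀) ^ 2 * c ^ 2 = 1) hne
    · linarith
  nlinarith [hy₁, hy₂, hsq]
end

section
/- Let a, b, c be real with c ≠ 0, x₀ ≠ ln|c| real, and y real with y ≠ 0. If x₀ + iy is a root of λ + cλe^{-λ} + a + be^{-λ} = 0, then ((a + 2x₀)c + b)e^{-x₀}·cos y + c(b + cx₀)e^{-2x₀} + a + x₀ = 0. -/
open Complex Real ComplexConjugate

/-!
Write `λ = x₀ + i y` and `E = e^{-λ}`. Multiplying `h(λ) = (λ + a) + (cλ + b) E` by `1 + c Ē`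
and taking real parts, the terms in `y sin y` cancel and `E Ē = e^{-2x₀}`; the real part is
exactly the left-hand side of the identity, which therefore vanishes at a root of `h`.
-/

noncomputable def charFun (a b c : ℝ) (z : ℂ) : ℂ :=
  z + c * z * Complex.exp (-z) + a + b * Complex.exp (-z)

theorem re_charFun_mul_one_add_conj_exp (a b c : ℝ) (z : ℂ) :
    (charFun a b c z * (1 + c * conj (Complex.exp (-z)))).re =
      ((a + 2 * z.re) * c + b) * Real.exp (-z.re) * Real.cos z.im +
        c * (b + c * z.re) * Real.exp (-2 * z.re) + a + z.re := by
  have hexp : Real.exp (-2 * z.re) = Real.exp (-z.re) ^ 2 := by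
    rw [sq, ← Real.exp_add]; ring_nf
  simp only [charFun, mul_re, mul_im, add_re, add_im, one_re, one_im, conj_re, conj_im,
    exp_re, exp_im, neg_re, neg_im, ofReal_re, ofReal_im, Real.cos_neg, Real.sin_neg]
  rw [hexp]
  linear_combination c * Real.exp (-z.re) ^ 2 * (c * z.re + b) * Real.sin_sq_add_cos_sq z.im

theorem stmt_13_general (a b c : ℝ) (x₀ y : ℝ)
    (hroot :
      ((x₀ : ℂ) + Complex.I * y) +
        (c : ℂ) * ((x₀ : ℂ) + Complex.I * y) * Complex.exp (-((x₀ : ℂ) + Complex.I * y)) +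
        (a : ℂ) + (b : ℂ) * Complex.exp (-((x₀ : ℂ) + Complex.I * y)) = 0) :
    ((a + 2 * x₀) * c + b) * Real.exp (-x₀) * Real.cos y +
      c * (b + c * x₀) * Real.exp (-2 * x₀) + a + x₀ = 0 := by
  have h := re_charFun_mul_one_add_conj_exp a b c (x₀ + Complex.I * y)
  have hre : ((x₀ : ℂ) + Complex.I * y).re = x₀ := by simp
  have him : ((x₀ : ℂ) + Complex.I * y).im = y := by simp
  rw [show charFun a b c (x₀ + Complex.I * y) = 0 from hroot, zero_mul, zero_re, hre, him] at h
  exact h.symm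

theorem stmt_13 (a b c : ℝ) (hc : c ≠ 0) (x₀ y : ℝ)
    (hx : x₀ ≠ Real.log |c|) (hy : y ≠ 0)
    (hroot :
      ((x₀ : ℂ) + Complex.I * y) +
        (c : ℂ) * ((x₀ : ℂ) + Complex.I * y) * Complex.exp (-((x₀ : ℂ) + Complex.I * y)) +
        (a : ℂ) + (b : ℂ) * Complex.exp (-((x₀ : ℂ) + Complex.I * y)) = 0) :
    ((a + 2 * x₀) * c + b) * Real.exp (-x₀) * Real.cos y +
      c * (b + c * x₀) * Real.exp (-2 * x₀) + a + x₀ = 0 :=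
  stmt_13_general a b c x₀ y hroot
end
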